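/- arXiv:1408.3815 — 2 statements merged into one kernel-verified Lean document; each statement's English description precedes it below -/
import Mathlib

section
/- Let R be a commutative radical algebra and I an ideal in R such that R² + I = R. Then I is not a maximal ideal in R. -/
/-- `M` is an ideal of the (non-unital) commutative algebra `R`. -/
def IsIdeal {R : Type*} [NonUnitalCommRing R] [Module ℂ R] (M : Submodule ℂ R) : Prop :=
  ∀ a : R, ∀ x ∈ M, a * x ∈ M

/-- `M` is a maximal ideal of `R`. -/
def IsMaximalIdeal {R : Type*} [NonUnitalCommRing R] [Module ℂ R] (M : Submodule ℂ R) : Prop :=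
  IsIdeal M ∧ M ≠ ⊤ ∧ ∀ N : Submodule ℂ R, IsIdeal N → M ≤ N → N = M ∨ N = ⊤

/-- `R²`: the linear span of all products `a * b` with `a, b ∈ R`. -/
def sqIdeal (R : Type*) [NonUnitalCommRing R] [Module ℂ R] : Submodule ℂ R :=
  Submodule.span ℂ {x : R | ∃ a b : R, x = a * b}

/-- `R` is a radical algebra: every element is quasi-invertible
(equivalently, `e - a` is invertible in the unitization for every `a ∈ R`). -/
def IsRadicalAlgebra (R : Type*) [NonUnitalCommRing R] [Module ℂ R] : Prop :=
  ∀ a : R, ∃ b : R, a + b - a * b = 0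

/-- Let `R` be a commutative radical algebra and `I` an ideal with `R² + I = R`.
Then `I` is not a maximal ideal in `R`. -/
theorem radical_ideal_not_maximal
    {R : Type*} [NonUnitalCommRing R] [Module ℂ R]
    [IsScalarTower ℂ R R] [SMulCommClass ℂ R R]
    (hrad : IsRadicalAlgebra R)
    (I : Submodule ℂ R) (hI : IsIdeal I) (hsq : sqIdeal R ⊔ I = ⊤) :
    ¬ IsMaximalIdeal I := by
  rintro ⟨hid, hne, hmax⟩
  -- there exist a, b with a * b ∉ I, otherwise sqIdeal ≤ I and I = ⊤
  have hex : ∃ a b : R, a * b ∉ I := by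
    by_contra h
    push_neg at h
    have h1 : sqIdeal R ≤ I :=
      Submodule.span_le.mpr (by rintro x ⟨a, b, rfl⟩; exact h a b)
    have h2 : (⊤ : Submodule ℂ R) ≤ I := hsq ▸ sup_le h1 le_rfl
    exact hne (top_le_iff.mp h2)
  obtain ⟨a, b, hab⟩ := hex
  -- M = a*R + I is an ideal containing I
  set M : Submodule ℂ R := LinearMap.range (LinearMap.mul ℂ R a) ⊔ I with hM
  have hMideal : IsIdeal M := by
    intro r x hx
    rw [hM, Submodule.mem_sup] at hx ⊢
    obtain ⟨m, hm, i, hi, rfl⟩ := hx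
    obtain ⟨y, rfl⟩ := hm
    refine ⟨a * (r * y), ⟨r * y, rfl⟩, r * i, hI r i hi, ?_⟩
    simp only [LinearMap.mul_apply_apply]
    rw [mul_add, mul_left_comm]
  have hMtop : M = ⊤ := by
    rcases hmax M hMideal le_sup_right with hMI | hMtop
    · exfalso
      apply hab
      rw [← hMI, hM, Submodule.mem_sup]
      exact ⟨a * b, ⟨b, rfl⟩, 0, I.zero_mem, by simp⟩
    · exact hMtop
  -- a ∈ M gives u with a - a*u ∈ I
  have haM : a ∈ M := hMtop ▸ Submodule.mem_top
  rw [hM, Submodule.mem_sup] at haM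
  obtain ⟨m, hm, i, hi, ha⟩ := haM
  obtain ⟨u, rfl⟩ := hm
  simp only [LinearMap.mul_apply_apply] at ha
  have hau : a - a * u ∈ I := by
    have : a - a * u = i := (sub_eq_iff_eq_add').mpr ha.symm
    rw [this]; exact hi
  -- u is a unit mod I : ∀ x, x * u - x ∈ I
  have hmod : ∀ x : R, x * u - x ∈ I := by
    intro x
    have hxM : x ∈ M := hMtop ▸ Submodule.mem_top
    rw [hM, Submodule.mem_sup] at hxM
    obtain ⟨m, hm, j, hj, rfl⟩ := hxM
    obtain ⟨y, rfl⟩ := hm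
    simp only [LinearMap.mul_apply_apply]
    have h1 : y * (a - a * u) ∈ I := hI y _ hau
    have h2 : j * u ∈ I := by rw [mul_comm]; exact hI u j hj
    have h3 : (a * y + j) * u - (a * y + j) = -(y * (a - a * u)) + (j * u - j) := by
      rw [mul_sub, add_mul, mul_comm y a, mul_assoc, mul_comm a (y * u),
        mul_assoc, mul_comm u a]
      abel
    rw [h3]
    exact I.add_mem (I.neg_mem h1) (I.sub_mem h2 hj)
  -- quasi-inverse of u
  obtain ⟨v, hv⟩ := hrad u
  have huI : u ∈ I := by
    have h1 : v * u - v ∈ I := hmod v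
    have h2 : u = v * u - v := by
      rw [mul_comm]
      exact eq_sub_of_add_eq (sub_eq_zero.mp hv)
    rw [h2]; exact h1
  -- then every x ∈ I, contradiction
  apply hne
  rw [eq_top_iff]
  intro x _
  have h1 : x * u - x ∈ I := hmod x
  have h2 : x * u ∈ I := hI x u huI
  have : x = x * u - (x * u - x) := (sub_sub_cancel _ _).symm
  rw [this]
  exact I.sub_mem h2 h1
end

section
/- Let R be a commutative radical Banach algebra with a bounded approximate identity. Then R² = R, and hence R has no maximal ideals. -/
/-- A bounded approximate identity: a bounded net `(e_i)` with `e_i * a → a` for all `a`. -/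
def HasBAI (R : Type*) [NonUnitalNormedCommRing R] : Prop :=
  ∃ (ι : Type) (l : Filter ι) (e : ι → R) (C : ℝ), l.NeBot ∧ (∀ i, ‖e i‖ ≤ C) ∧
    ∀ a : R, Filter.Tendsto (fun i => e i * a) l (nhds a)

open Filter Topology

theorem exists_seq_of_forall_exists_succ {α : Type*} {P : ℕ → α → Prop} {Q : ℕ → α → α → Prop}
    {x₀ : α} (h₀ : P 0 x₀) (step : ∀ n x, P n x → ∃ y, P (n + 1) y ∧ Q n x y) :
    ∃ x : ℕ → α, ∀ n, P n (x n) ∧ Q n (x n) (x (n + 1)) := by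
  have : Nonempty α := ⟨x₀⟩
  choose! f hfP hfQ using step
  let x : ℕ → α := fun n => Nat.rec x₀ f n
  have hP : ∀ n, P n (x n) := fun n => Nat.rec h₀ (fun n ih => hfP n _ ih) n
  exact ⟨x, fun n => ⟨hP n, hfQ n _ (hP n)⟩⟩

section NormedRing

variable {R : Type*} [NonUnitalNormedRing R]

theorem norm_self_sub_mul_le (s x : R) : ‖x - s * x‖ ≤ (1 + ‖s‖) * ‖x‖ :=
  calc ‖x - s * x‖ ≤ ‖x‖ + ‖s‖ * ‖x‖ := (norm_sub_le _ _).trans (by gcongr; exact norm_mul_le _ _)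
    _ = (1 + ‖s‖) * ‖x‖ := by ring

theorem exists_add_mul_eq_self_of_norm_le [CompleteSpace R] {h : R} (hh : ‖h‖ ≤ 1 / 2) :
    ∃ s : R, s + h * s = h ∧ ‖s‖ ≤ 1 := by
  have hf : ContractingWith (1 / 2) (fun x : R => h - h * x) := by
    refine ⟨by norm_num, LipschitzWith.of_dist_le_mul fun x y => ?_⟩
    rw [dist_eq_norm, dist_eq_norm, sub_sub_sub_cancel_left, ← mul_sub, norm_sub_rev x y]
    exact (norm_mul_le _ _).trans (by gcongr; simpa using hh)
  set s := ContractingWith.fixedPoint _ hf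
  have hs : h - h * s = s := ContractingWith.fixedPoint_isFixedPt hf
  refine ⟨s, eq_sub_iff_add_eq.mp hs.symm, ?_⟩
  have : ‖s‖ ≤ ‖h‖ + ‖h‖ * ‖s‖ := by
    calc ‖s‖ = ‖h - h * s‖ := by rw [hs]
      _ ≤ ‖h‖ + ‖h‖ * ‖s‖ := (norm_sub_le _ _).trans (by gcongr; exact norm_mul_le _ _)
  nlinarith [norm_nonneg s, norm_nonneg h]

end NormedRing

open Unitization

section Algebra

variable {𝕜 R : Type*} [CommRing 𝕜] [NonUnitalCommRing R] [Module 𝕜 R]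

/-- `c + u` is invertible in the unitization, with inverse `c⁻¹ (1 - q)`, and `b = (c + u)⁻¹ a`. -/
def IsCohenTriple (a : R) (c : 𝕜) (b q u : R) : Prop :=
  (inl c + inr u : Unitization 𝕜 R) * inr b = inr a ∧ (inl c + inr u) * (1 - inr q) = inl c

theorem isCohenTriple_one (a : R) : IsCohenTriple a (1 : 𝕜) a 0 0 := by
  simp [IsCohenTriple]

variable [IsScalarTower 𝕜 R R] [SMulCommClass 𝕜 R R]

theorem IsCohenTriple.smul_add_mul_eq {a b q u : R} {c : 𝕜} (h : IsCohenTriple a c b q u) :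
    c • b + u * b = a := by
  apply inr_injective (R := 𝕜)
  simp only [inr_add, inr_mul, ← inl_mul_inr]
  linear_combination h.1

theorem IsCohenTriple.next {a b q u E s : R} {c δ τ : 𝕜} (hτ : τ * (1 + δ) = 1)
    (h : IsCohenTriple a c b q u) (hs : s + (δ • (E + q - q * E)) * s = δ • (E + q - q * E)) :
    IsCohenTriple a (τ * c)
      (b + δ • ((b - E * b) - q * (b - E * b) - s * ((b - E * b) - q * (b - E * b))))
      (q + s - s * q) (u + (δ * τ * c) • E) := by
  obtain ⟨hb, hq⟩ := h
  apply_fun (inr : R → Unitization 𝕜 R) at hs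
  apply_fun (inl : 𝕜 → Unitization 𝕜 R) at hτ
  simp only [IsCohenTriple, inr_add, inr_sub, inr_mul, ← inl_mul_inr, inl_mul, inl_add,
    inl_one] at hs hτ ⊢
  have hq' : (inl τ * inl c + (inr u + inl δ * inl τ * inl c * inr E) : Unitization 𝕜 R) *
      (1 - (inr q + inr s - inr s * inr q)) = inl τ * inl c := by
    linear_combination (1 - inr s : Unitization 𝕜 R) * hq - (1 - inr s) * inl c * inr q * hτ -
      inl τ * inl c * hs
  exact ⟨by linear_combination hb + inl c * inr b * hτ + inl δ * (1 - inr E) * inr b * hq', hq'⟩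

end Algebra

section Normed

variable {𝕜 : Type*} [RCLike 𝕜] {R : Type*} [NonUnitalNormedCommRing R] [NormedSpace 𝕜 R]
  [IsScalarTower 𝕜 R R] [SMulCommClass 𝕜 R R]

theorem IsCohenTriple.exists_next_of_norm_le [CompleteSpace R] {a b q u E : R} {c : 𝕜}
    {δ C : ℝ} (hδ : 0 < δ) (hδC : δ * (C + 1) ≤ 1 / 2) (h : IsCohenTriple a c b q u) (hE : ‖E‖ ≤ C)
    (hqE : ‖q - q * E‖ ≤ 1) :
    ∃ b' q' u', IsCohenTriple a (((1 + δ)⁻¹ : ℝ) * c) b' q' u' ∧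
      ‖b' - b‖ ≤ 2 * δ * (1 + ‖q‖) * ‖b - E * b‖ ∧ ‖u' - u‖ ≤ δ * ‖c‖ * C := by
  have hw : ‖(δ : 𝕜) • (E + q - q * E)‖ ≤ 1 / 2 := by
    rw [norm_smul, RCLike.norm_ofReal, abs_of_pos hδ]
    calc δ * ‖E + q - q * E‖ ≤ δ * (C + 1) := by
          rw [add_sub_assoc]; gcongr; exact (norm_add_le _ _).trans (add_le_add hE hqE)
      _ ≤ 1 / 2 := hδC
  obtain ⟨s, hs, hs1⟩ := exists_add_mul_eq_self_of_norm_le hw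
  have hτ : (((1 + δ)⁻¹ : ℝ) : 𝕜) * (1 + δ) = 1 := by
    have : (1 + δ)⁻¹ * (1 + δ) = 1 := inv_mul_cancel₀ (by positivity)
    exact_mod_cast this
  refine ⟨_, _, _, h.next hτ hs, ?_, ?_⟩
  · rw [add_sub_cancel_left, norm_smul, RCLike.norm_ofReal, abs_of_pos hδ]
    calc δ * ‖_ - s * _‖ ≤ δ * ((1 + ‖s‖) * ((1 + ‖q‖) * ‖b - E * b‖)) := by
          gcongr; exact (norm_self_sub_mul_le _ _).trans (by gcongr; exact norm_self_sub_mul_le _ _)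
      _ ≤ 2 * δ * (1 + ‖q‖) * ‖b - E * b‖ := by
          have : 0 ≤ δ * ((1 + ‖q‖) * ‖b - E * b‖) := by positivity
          nlinarith [mul_nonneg (sub_nonneg.2 hs1) this]
  · have hτ1 : (1 + δ)⁻¹ ≤ 1 := inv_le_one_of_one_le₀ (by linarith)
    rw [add_sub_cancel_left, norm_smul, norm_mul, norm_mul, RCLike.norm_ofReal, RCLike.norm_ofReal,
      abs_of_pos hδ, abs_of_pos (by positivity)]
    calc δ * (1 + δ)⁻¹ * ‖c‖ * ‖E‖ ≤ δ * 1 * ‖c‖ * C := by gcongr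
      _ = δ * ‖c‖ * C := by ring

theorem IsCohenTriple.exists_next_of_tendsto [CompleteSpace R] {a b q u : R} {c : 𝕜}
    {ι : Type*} {l : Filter ι} [l.NeBot] {e : ι → R} {δ C η : ℝ} (heC : ∀ i, ‖e i‖ ≤ C)
    (he : ∀ x, Tendsto (fun i => e i * x) l (𝓝 x)) (hδ : 0 < δ) (hδC : δ * (C + 1) ≤ 1 / 2)
    (hη : 0 < η) (h : IsCohenTriple a c b q u) :
    ∃ b' q' u', IsCohenTriple a (((1 + δ)⁻¹ : ℝ) * c) b' q' u' ∧
      dist b b' ≤ η ∧ dist u u' ≤ δ * ‖c‖ * C := by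
  have hK : 0 < 2 * δ * (1 + ‖q‖) := by positivity
  obtain ⟨i, hib, hiq⟩ := (((he b).eventually (Metric.closedBall_mem_nhds _ (div_pos hη hK))).and
    ((he q).eventually (Metric.closedBall_mem_nhds _ one_pos))).exists
  obtain ⟨b', q', u', h', hb', hu'⟩ := h.exists_next_of_norm_le hδ hδC (heC i)
    (by simpa [mul_comm q, dist_eq_norm'] using hiq)
  refine ⟨b', q', u', h', ?_, by rwa [dist_eq_norm']⟩
  calc dist b b' ≤ 2 * δ * (1 + ‖q‖) * (η / (2 * δ * (1 + ‖q‖))) := by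
        rw [dist_eq_norm']; exact hb'.trans (by gcongr; rwa [← dist_eq_norm'])
    _ = η := mul_div_cancel₀ _ hK.ne'

theorem IsCohenTriple.eq_mul_of_tendsto {a b₀ u₀ : R} {τ : 𝕜} (hτ : ‖τ‖ < 1)
    {b q u : ℕ → R} (h : ∀ n, IsCohenTriple a (τ ^ n) (b n) (q n) (u n))
    (hb : Tendsto b atTop (𝓝 b₀)) (hu : Tendsto u atTop (𝓝 u₀)) : a = u₀ * b₀ := by
  have hlim := ((tendsto_pow_atTop_nhds_zero_of_norm_lt_one hτ).smul hb).add (hu.mul hb)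
  simp only [fun n => (h n).smul_add_mul_eq, zero_smul, zero_add] at hlim
  exact tendsto_nhds_unique tendsto_const_nhds hlim

end Normed

theorem exists_eq_mul_of_hasBAI (𝕜 : Type*) [RCLike 𝕜] {R : Type*} [NonUnitalNormedCommRing R]
    [NormedSpace 𝕜 R] [IsScalarTower 𝕜 R R] [SMulCommClass 𝕜 R R] [CompleteSpace R]
    (hbai : HasBAI R) (a : R) : ∃ u b : R, a = u * b := by
  obtain ⟨ι, l, e, C, hl, heC, he⟩ := hbai
  have hC : 0 ≤ C := (norm_nonneg _).trans (heC (l.nonempty_of_neBot).some)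
  set δ : ℝ := 1 / (2 * (C + 1))
  have hδ : 0 < δ := by positivity
  have hδC : δ * (C + 1) ≤ 1 / 2 := by
    rw [div_mul_eq_mul_div, one_mul, div_le_div_iff₀ (by positivity) two_pos]; linarith
  set τ : ℝ := (1 + δ)⁻¹
  have hτ : τ < 1 := inv_lt_one_of_one_lt₀ (by linarith)
  have step : ∀ n (x : R × R × R), IsCohenTriple a ((τ : 𝕜) ^ n) x.1 x.2.1 x.2.2 →
      ∃ y : R × R × R, IsCohenTriple a ((τ : 𝕜) ^ (n + 1)) y.1 y.2.1 y.2.2 ∧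
        (dist x.1 y.1 ≤ 1 * (1 / 2) ^ n ∧ dist x.2.2 y.2.2 ≤ δ * C * τ ^ n) := by
    rintro n ⟨b, q, u⟩ hx
    obtain ⟨b', q', u', hx', hb', hu'⟩ :=
      hx.exists_next_of_tendsto heC he hδ hδC (η := (1 / 2) ^ n) (by positivity)
    refine ⟨(b', q', u'), by rwa [pow_succ'], by rwa [one_mul], ?_⟩
    simpa [abs_of_pos (by positivity : 0 < τ), mul_right_comm δ] using hu'
  obtain ⟨x, hx⟩ := exists_seq_of_forall_exists_succ (x₀ := (a, 0, 0))
    (by rw [pow_zero]; exact isCohenTriple_one a) step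
  obtain ⟨b₀, hb⟩ := cauchySeq_tendsto_of_complete
    (cauchySeq_of_le_geometric _ _ (by norm_num) fun n => (hx n).2.1)
  obtain ⟨u₀, hu⟩ := cauchySeq_tendsto_of_complete
    (cauchySeq_of_le_geometric _ _ hτ fun n => (hx n).2.2)
  have hτ' : ‖(τ : 𝕜)‖ < 1 := by rwa [RCLike.norm_ofReal, abs_of_pos (by positivity)]
  exact ⟨u₀, b₀, IsCohenTriple.eq_mul_of_tendsto hτ' (fun n => (hx n).1) hb hu⟩

section Ideals

variable {R : Type*} [NonUnitalCommRing R] [Module ℂ R]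

theorem IsRadicalAlgebra.mem_of_eq_add_mul (hrad : IsRadicalAlgebra R) {M : Submodule ℂ R}
    (hM : IsIdeal M) {x m r : R} (hm : m ∈ M) (hx : x = m + r * x) : x ∈ M := by
  obtain ⟨r', hr'⟩ := hrad r
  have hm' : m = x - r * x := eq_sub_of_add_eq hx.symm
  have : x = m - r' * m :=
    calc x = x - (r + r' - r * r') * x := by rw [hr', zero_mul, sub_zero]
      _ = x - r * x - r' * (x - r * x) := by
        simp only [sub_mul, add_mul, mul_sub, mul_assoc, mul_left_comm r' r]; abel
      _ = m - r' * m := by rw [← hm']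
  exact this ▸ M.sub_mem hm (hM r' m hm)

variable [IsScalarTower ℂ R R]

theorem IsIdeal.sup_range_mulRight {M : Submodule ℂ R} (hM : IsIdeal M) (x : R) :
    IsIdeal (M ⊔ LinearMap.range (LinearMap.mulRight ℂ x)) := by
  intro a y hy
  obtain ⟨m, hm, _, ⟨r, rfl⟩, rfl⟩ := Submodule.mem_sup.mp hy
  exact Submodule.mem_sup.mpr ⟨a * m, hM a m hm, _, ⟨a * r, rfl⟩, by simp [mul_add, mul_assoc]⟩

theorem IsRadicalAlgebra.not_isMaximalIdeal (hrad : IsRadicalAlgebra R) (hsq : sqIdeal R = ⊤)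
    (M : Submodule ℂ R) : ¬ IsMaximalIdeal M := by
  rintro ⟨hM, hMtop, hmax⟩
  refine hMtop (eq_top_iff.mpr (hsq ▸ Submodule.span_le.mpr ?_))
  rintro _ ⟨r, x, rfl⟩
  rcases hmax _ (hM.sup_range_mulRight x) le_sup_left with hJ | hJ
  · exact hJ ▸ Submodule.mem_sup_right ⟨r, rfl⟩
  · obtain ⟨m, hm, _, ⟨r', rfl⟩, hx⟩ := Submodule.mem_sup.mp (hJ ▸ Submodule.mem_top : x ∈ _)
    exact hM r x (hrad.mem_of_eq_add_mul hM hm hx.symm)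

end Ideals

/-- A commutative radical Banach algebra with a bounded approximate identity satisfies
`R² = R`, and hence has no maximal ideals. -/
theorem radical_banach_algebra_with_bai_no_maximal_ideals
    {R : Type*} [NonUnitalNormedCommRing R] [NormedSpace ℂ R]
    [IsScalarTower ℂ R R] [SMulCommClass ℂ R R] [CompleteSpace R]
    (hrad : IsRadicalAlgebra R) (hbai : HasBAI R) :
    sqIdeal R = ⊤ ∧ ∀ M : Submodule ℂ R, ¬ IsMaximalIdeal M := by
  have hsq : sqIdeal R = ⊤ := Submodule.eq_top_iff'.mpr fun a => Submodule.subset_span <|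
    let ⟨u, b, h⟩ := exists_eq_mul_of_hasBAI ℂ hbai a; ⟨u, b, h⟩
  exact ⟨hsq, hrad.not_isMaximalIdeal hsq⟩
end
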